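/- Let A11 ∈ ℝ^{n×n}, A12 ∈ ℝ^{n×m}, A21 ∈ ℝ^{m×n}, A22 ∈ ℝ^{m×m}, and suppose A22 is invertible. Set A0 := A11 − A12·A22^{−1}·A21. Then there exist ε0 > 0, K > 0, and a function L : (0, ε0) → ℝ^{m×n} such that for every ε ∈ (0, ε0): (i) A22·L(ε) = A21 + ε·L(ε)·(A11 − A12·L(ε)), and (ii) ‖L(ε) − A22^{−1}·A21 − ε·A22^{−2}·A21·A0‖ ≤ K·ε². -/
import Mathlib


/- We equip matrices with the elementwise sup norm (all matrix norms are equivalent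
in finite dimension, so "any matrix norm" may be taken to be this one). -/
attribute [local instance] Matrix.normedAddCommGroup

open scoped NNReal

attribute [local instance] Matrix.normedSpace

lemma mat_norm_mul_le {a b c : ℕ} (A : Matrix (Fin a) (Fin b) ℝ)
    (B : Matrix (Fin b) (Fin c) ℝ) : ‖A * B‖ ≤ b * ‖A‖ * ‖B‖ := by
  rw [Matrix.norm_le_iff (by positivity)]
  intro i j
  calc ‖(A*B) i j‖ = ‖∑ k, A i k * B k j‖ := rfl
  _ ≤ ∑ k, ‖A i k * B k j‖ := norm_sum_le _ _
  _ ≤ ∑ k : Fin b, ‖A‖ * ‖B‖ := by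
      refine Finset.sum_le_sum fun k _ => ?_
      rw [norm_mul]
      exact mul_le_mul (Matrix.norm_entry_le_entrywise_sup_norm A)
        (Matrix.norm_entry_le_entrywise_sup_norm B) (norm_nonneg _) (norm_nonneg _)
  _ = b * ‖A‖ * ‖B‖ := by simp [Finset.sum_const]; ring

set_option maxHeartbeats 1000000 in
/-- Existence of the matrix L(ε) solving the quadratic matrix equation
A22·L = A21 + ε·L·(A11 − A12·L), together with its second-order expansion
L(ε) = A22⁻¹·A21 + ε·A22⁻²·A21·A0 + O(ε²), where A0 = A11 − A12·A22⁻¹·A21. -/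
theorem smes_L_existence_and_expansion {n m : ℕ}
    (A11 : Matrix (Fin n) (Fin n) ℝ) (A12 : Matrix (Fin n) (Fin m) ℝ)
    (A21 : Matrix (Fin m) (Fin n) ℝ) (A22 : Matrix (Fin m) (Fin m) ℝ)
    (hA22 : IsUnit A22) :
    ∃ ε0 > (0 : ℝ), ∃ K > (0 : ℝ), ∃ L : ℝ → Matrix (Fin m) (Fin n) ℝ,
      ∀ ε ∈ Set.Ioo (0 : ℝ) ε0,
        A22 * L ε = A21 + ε • (L ε * (A11 - A12 * L ε)) ∧
        ‖L ε - A22⁻¹ * A21 -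
            ε • (A22⁻¹ ^ 2 * A21 * (A11 - A12 * (A22⁻¹ * A21)))‖ ≤ K * ε ^ 2 := by
  have hdet : IsUnit A22.det := (Matrix.isUnit_iff_isUnit_det A22).mp hA22
  have hA22B : A22 * A22⁻¹ = 1 := Matrix.mul_nonsing_inv A22 hdet
  set B : Matrix (Fin m) (Fin m) ℝ := A22⁻¹ with hB
  set L0 : Matrix (Fin m) (Fin n) ℝ := B * A21 with hL0
  have hmn : (0:ℝ) ≤ (m:ℝ) := Nat.cast_nonneg m
  have hnn : (0:ℝ) ≤ (n:ℝ) := Nat.cast_nonneg n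
  set c : ℝ := (m : ℝ) + (n : ℝ) + 1 with hc
  have hc0 : (0:ℝ) ≤ c := by simp only [hc]; linarith
  have hcm : (m:ℝ) ≤ c := by simp only [hc]; linarith
  have hcn : (n:ℝ) ≤ c := by simp only [hc]; linarith
  have hmul : ∀ {a b d : ℕ} (X : Matrix (Fin a) (Fin b) ℝ) (Y : Matrix (Fin b) (Fin d) ℝ),
      (b:ℝ) ≤ c → ‖X * Y‖ ≤ c * ‖X‖ * ‖Y‖ := by
    intro a b d X Y hb
    refine (mat_norm_mul_le X Y).trans ?_
    exact mul_le_mul_of_nonneg_right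
      (mul_le_mul_of_nonneg_right hb (norm_nonneg X)) (norm_nonneg Y)
  set R : ℝ := ‖L0‖ + 1 with hR
  set F : Matrix (Fin m) (Fin n) ℝ → Matrix (Fin n) (Fin n) ℝ := fun M => A11 - A12 * M with hF
  set G : Matrix (Fin m) (Fin n) ℝ → Matrix (Fin m) (Fin n) ℝ := fun M => B * (M * F M) with hG
  set CF : ℝ := ‖A11‖ + c * ‖A12‖ * R with hCF
  set CG : ℝ := c * ‖B‖ * (c * R * CF) with hCG
  set CL : ℝ := c * ‖B‖ * (c * CF + c * R * (c * ‖A12‖)) with hCL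
  have hR0 : (0:ℝ) ≤ R := by positivity
  have hCF0 : (0:ℝ) ≤ CF := by simp only [hCF]; positivity
  have hCG0 : (0:ℝ) ≤ CG := by simp only [hCG]; positivity
  have hCL0 : (0:ℝ) ≤ CL := by simp only [hCL]; positivity
  have hnormM : ∀ M : Matrix (Fin m) (Fin n) ℝ, ‖M - L0‖ ≤ 1 → ‖M‖ ≤ R := by
    intro M hM
    have h := norm_add_le (M - L0) L0
    rw [sub_add_cancel] at h
    simp only [hR]; linarith
  have hFb : ∀ M : Matrix (Fin m) (Fin n) ℝ, ‖M - L0‖ ≤ 1 → ‖F M‖ ≤ CF := by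
    intro M hM
    calc ‖F M‖ ≤ ‖A11‖ + ‖A12 * M‖ := norm_sub_le _ _
    _ ≤ ‖A11‖ + c * ‖A12‖ * ‖M‖ := by linarith [hmul A12 M hcm]
    _ ≤ CF := by
        have h1 : c * ‖A12‖ * ‖M‖ ≤ c * ‖A12‖ * R :=
          mul_le_mul_of_nonneg_left (hnormM M hM) (by positivity)
        simp only [hCF]; linarith
  have hMF : ∀ M : Matrix (Fin m) (Fin n) ℝ, ‖M - L0‖ ≤ 1 → ‖M * F M‖ ≤ c * R * CF := by
    intro M hM
    refine (hmul M (F M) hcn).trans ?_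
    exact mul_le_mul (mul_le_mul_of_nonneg_left (hnormM M hM) hc0) (hFb M hM)
      (norm_nonneg _) (by positivity)
  have hGb : ∀ M : Matrix (Fin m) (Fin n) ℝ, ‖M - L0‖ ≤ 1 → ‖G M‖ ≤ CG := by
    intro M hM
    refine (hmul B (M * F M) hcm).trans ?_
    exact mul_le_mul_of_nonneg_left (hMF M hM) (by positivity)
  have hGlip : ∀ M M' : Matrix (Fin m) (Fin n) ℝ, ‖M - L0‖ ≤ 1 → ‖M' - L0‖ ≤ 1 →
      ‖G M - G M'‖ ≤ CL * ‖M - M'‖ := by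
    intro M M' hM hM'
    have key : M * F M - M' * F M' = (M - M') * F M - M' * (A12 * (M - M')) := by
      simp only [hF, Matrix.mul_sub, Matrix.sub_mul, Matrix.mul_assoc]
      abel
    have hGd : G M - G M' = B * (M * F M - M' * F M') := by
      simp only [hG, Matrix.mul_sub]
    have h1 : ‖(M - M') * F M‖ ≤ c * CF * ‖M - M'‖ := by
      refine (hmul (M - M') (F M) hcn).trans ?_
      calc c * ‖M - M'‖ * ‖F M‖ ≤ c * ‖M - M'‖ * CF :=
            mul_le_mul_of_nonneg_left (hFb M hM) (by positivity)
      _ = c * CF * ‖M - M'‖ := by ring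
    have h2 : ‖M' * (A12 * (M - M'))‖ ≤ c * R * (c * ‖A12‖) * ‖M - M'‖ := by
      refine (hmul M' (A12 * (M - M')) hcn).trans ?_
      have ha : ‖A12 * (M - M')‖ ≤ c * ‖A12‖ * ‖M - M'‖ := hmul A12 (M - M') hcm
      calc c * ‖M'‖ * ‖A12 * (M - M')‖
          ≤ c * R * (c * ‖A12‖ * ‖M - M'‖) :=
            mul_le_mul (mul_le_mul_of_nonneg_left (hnormM M' hM') hc0) ha
              (norm_nonneg _) (by positivity)
      _ = c * R * (c * ‖A12‖) * ‖M - M'‖ := by ring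
    have h3 : ‖M * F M - M' * F M'‖ ≤ (c * CF + c * R * (c * ‖A12‖)) * ‖M - M'‖ := by
      rw [key]
      refine (norm_sub_le _ _).trans ?_
      rw [add_mul]; exact add_le_add h1 h2
    rw [hGd]
    refine (hmul B _ hcm).trans ?_
    calc c * ‖B‖ * ‖M * F M - M' * F M'‖
        ≤ c * ‖B‖ * ((c * CF + c * R * (c * ‖A12‖)) * ‖M - M'‖) :=
          mul_le_mul_of_nonneg_left h3 (by positivity)
    _ = CL * ‖M - M'‖ := by simp only [hCL]; ring
  set ε0 : ℝ := min (1 / (CG + 1)) (1 / (2 * (CL + 1))) with hε0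
  have hε0pos : 0 < ε0 := lt_min (by positivity) (by positivity)
  refine ⟨ε0, hε0pos, CL * CG + 1, by positivity, ?_⟩
  have main : ∀ ε ∈ Set.Ioo (0:ℝ) ε0, ∃ M : Matrix (Fin m) (Fin n) ℝ,
      A22 * M = A21 + ε • (M * (A11 - A12 * M)) ∧
      ‖M - A22⁻¹ * A21 - ε • (A22⁻¹ ^ 2 * A21 * (A11 - A12 * (A22⁻¹ * A21)))‖
        ≤ (CL * CG + 1) * ε ^ 2 := by
    intro ε hε
    obtain ⟨hε1, hε2⟩ := hε
    have hεCG : ε * CG ≤ 1 := by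
      have h : ε ≤ 1 / (CG + 1) := le_of_lt (hε2.trans_le (min_le_left _ _))
      have h2 : ε * CG ≤ (1 / (CG + 1)) * CG := mul_le_mul_of_nonneg_right h hCG0
      have h3 : (1 / (CG + 1)) * CG ≤ 1 := by
        rw [div_mul_eq_mul_div, one_mul, div_le_one (by positivity)]; linarith
      linarith
    have hεCL : ε * CL ≤ 1 / 2 := by
      have h : ε ≤ 1 / (2 * (CL + 1)) := le_of_lt (hε2.trans_le (min_le_right _ _))
      have h2 : ε * CL ≤ (1 / (2 * (CL + 1))) * CL := mul_le_mul_of_nonneg_right h hCL0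
      have h3 : (1 / (2 * (CL + 1))) * CL ≤ 1 / 2 := by
        rw [div_mul_eq_mul_div, one_mul, div_le_div_iff₀ (by positivity) (by norm_num)]
        linarith
      linarith
    set S := Metric.closedBall L0 1 with hS
    have hmem : ∀ M ∈ S, ‖M - L0‖ ≤ 1 := by
      intro M hM; rwa [Metric.mem_closedBall, dist_eq_norm] at hM
    have hTmaps : ∀ M ∈ S, L0 + ε • G M ∈ S := by
      intro M hM
      rw [Metric.mem_closedBall, dist_eq_norm, add_sub_cancel_left, norm_smul,
        Real.norm_eq_abs, abs_of_pos hε1]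
      calc ε * ‖G M‖ ≤ ε * CG := mul_le_mul_of_nonneg_left (hGb M (hmem M hM)) hε1.le
      _ ≤ 1 := hεCG
    have hne : S.Nonempty := ⟨L0, Metric.mem_closedBall_self (by norm_num)⟩
    haveI : Nonempty S := hne.to_subtype
    haveI : CompleteSpace S := Metric.isClosed_closedBall.completeSpace_coe
    set T : S → S := fun M => ⟨L0 + ε • G M.1, hTmaps M.1 M.2⟩ with hT
    have hcontr : ContractingWith (1/2 : ℝ≥0) T := by
      constructor
      · rw [← NNReal.coe_lt_coe]; norm_num
      · apply LipschitzWith.of_dist_le_mul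
        intro M M'
        have hd1 : dist (T M) (T M') = ‖(L0 + ε • G M.1) - (L0 + ε • G M'.1)‖ := by
          rw [Subtype.dist_eq, dist_eq_norm]
        have hd2 : (L0 + ε • G M.1) - (L0 + ε • G M'.1) = ε • (G M.1 - G M'.1) := by
          rw [smul_sub]; abel
        have hd : dist M M' = ‖M.1 - M'.1‖ := by rw [Subtype.dist_eq, dist_eq_norm]
        rw [hd1, hd2, hd, norm_smul, Real.norm_eq_abs, abs_of_pos hε1]
        have hco : ((1/2 : ℝ≥0) : ℝ) = 1/2 := by norm_num
        rw [hco]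
        calc ε * ‖G M.1 - G M'.1‖
            ≤ ε * (CL * ‖M.1 - M'.1‖) :=
              mul_le_mul_of_nonneg_left (hGlip M.1 M'.1 (hmem _ M.2) (hmem _ M'.2)) hε1.le
        _ = (ε * CL) * ‖M.1 - M'.1‖ := by ring
        _ ≤ (1/2) * ‖M.1 - M'.1‖ := mul_le_mul_of_nonneg_right hεCL (norm_nonneg _)
    set Mfix := hcontr.fixedPoint T with hMfixdef
    have hMfix : T Mfix = Mfix := hcontr.fixedPoint_isFixedPt
    have heq : (Mfix : Matrix (Fin m) (Fin n) ℝ) = L0 + ε • G Mfix.1 := by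
      conv_lhs => rw [← hMfix]
    have hMball : ‖(Mfix : Matrix (Fin m) (Fin n) ℝ) - L0‖ ≤ 1 := hmem _ Mfix.2
    have e1 : A22 * L0 = A21 := by
      rw [hL0, ← Matrix.mul_assoc, hA22B, Matrix.one_mul]
    have e2 : A22 * G Mfix.1 = Mfix.1 * F Mfix.1 := by
      simp only [hG]
      rw [← Matrix.mul_assoc, hA22B, Matrix.one_mul]
    refine ⟨Mfix.1, ?_, ?_⟩
    · calc A22 * Mfix.1 = A22 * (L0 + ε • G Mfix.1) := by conv_lhs => rw [heq]
      _ = A22 * L0 + ε • (A22 * G Mfix.1) := by rw [Matrix.mul_add, Matrix.mul_smul]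
      _ = A21 + ε • (Mfix.1 * (A11 - A12 * Mfix.1)) := by rw [e1, e2]
    · have hL1 : B ^ 2 * A21 * (A11 - A12 * L0) = G L0 := by
        simp only [hG, hF, hL0, pow_two, Matrix.mul_assoc]
      have hgoal : (Mfix : Matrix (Fin m) (Fin n) ℝ) - L0 - ε • G L0
          = ε • (G Mfix.1 - G L0) := by
        conv_lhs => rw [heq]
        rw [smul_sub]; abel
      rw [show A22⁻¹ = B from hB.symm, show B * A21 = L0 from hL0.symm, hL1, hgoal,
        norm_smul, Real.norm_eq_abs, abs_of_pos hε1]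
      have h2 : ‖(Mfix : Matrix (Fin m) (Fin n) ℝ) - L0‖ ≤ ε * CG := by
        conv_lhs => rw [heq]
        rw [add_sub_cancel_left, norm_smul, Real.norm_eq_abs, abs_of_pos hε1]
        exact mul_le_mul_of_nonneg_left (hGb Mfix.1 hMball) hε1.le
      have h3 : ‖G Mfix.1 - G L0‖ ≤ CL * (ε * CG) := by
        refine (hGlip Mfix.1 L0 hMball (by simp)).trans ?_
        exact mul_le_mul_of_nonneg_left h2 hCL0
      calc ε * ‖G Mfix.1 - G L0‖ ≤ ε * (CL * (ε * CG)) :=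
            mul_le_mul_of_nonneg_left h3 hε1.le
      _ = (CL * CG) * ε ^ 2 := by ring
      _ ≤ (CL * CG + 1) * ε ^ 2 :=
            mul_le_mul_of_nonneg_right (by linarith) (sq_nonneg ε)
  choose! L hL using main
  exact ⟨L, fun ε hε => hL ε hε⟩
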